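/- arXiv:2312.00341 — 2 statements merged into one kernel-verified Lean document; each statement's English description precedes it below -/
import Mathlib

section
/- Let a, b, c, d, e, f, g, h be integers with b = f and d = h. Then (u_{ab} ∘* u_{cd}) •* (u_{ef} ∘* u_{gh}) = (u_{ab} •* u_{ef}) ∘* (u_{cd} •* u_{gh}). -/
open MeasureTheory

instance : Fact (0 < 2 * Real.pi) := ⟨by positivity⟩

/-- The basis function `u_{jk} : ℤ × S¹ → ℂ`, `u_{jk}(n,θ) = e^{ikθ}` if `n = j` and `0`
otherwise, where `S¹ = ℝ/2πℤ` (so `fourier k θ = e^{ikθ}`). -/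
noncomputable def uBasis (j k : ℤ) : ℤ × AddCircle (2 * Real.pi) → ℂ :=
  fun p => if p.1 = j then fourier k p.2 else 0

/-- Vertical convolution on `ℤ ⋉ S¹` (action by rotation by `r`):
`(u ∘* v)(n,θ) = ∑_{m∈ℤ} u(m, [r(n−m)] + θ) · v(n−m, θ)`. -/
noncomputable def vconv (r : ℝ) (u v : ℤ × AddCircle (2 * Real.pi) → ℂ) :
    ℤ × AddCircle (2 * Real.pi) → ℂ :=
  fun p => ∑' m : ℤ,
    u (m, (↑(r * ((p.1 - m : ℤ) : ℝ)) : AddCircle (2 * Real.pi)) + p.2) * v (p.1 - m, p.2)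

/-- Horizontal convolution on `ℤ ⋉ S¹`, with the normalized Haar measure on `S¹`:
`(u •* v)(n,θ) = ∑_{m∈ℤ} ∫_{S¹} u(m,φ) v(n−m, θ−φ) dφ`. -/
noncomputable def hconv (u v : ℤ × AddCircle (2 * Real.pi) → ℂ) :
    ℤ × AddCircle (2 * Real.pi) → ℂ :=
  fun p => ∑' m : ℤ, ∫ φ, u (m, φ) * v (p.1 - m, p.2 - φ) ∂(AddCircle.haarAddCircle)

lemma fourier_arg_add {T : ℝ} (n : ℤ) (x y : AddCircle T) :
    fourier n (x + y) = fourier n x * fourier n y := by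
  simp_rw [fourier_apply, zsmul_add, AddCircle.toCircle_add, Circle.coe_mul]

lemma integral_fourier_haar (n : ℤ) :
    (∫ φ : AddCircle (2 * Real.pi), fourier n φ ∂AddCircle.haarAddCircle) =
      if n = 0 then 1 else 0 := by
  split_ifs with h
  · subst h
    have : (fun φ : AddCircle (2 * Real.pi) => (fourier 0 φ : ℂ)) = fun _ => (1 : ℂ) := by
      ext1 φ; exact fourier_zero
    rw [this, integral_const, probReal_univ, one_smul]
  · exact integral_eq_zero_of_add_right_eq_neg
      (fourier_add_half_inv_index h (by positivity))

lemma vconv_uBasis (r : ℝ) (a b c d : ℤ) :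
    vconv r (uBasis a b) (uBasis c d) =
      fun p => fourier b ((r * (c : ℝ) : ℝ) : AddCircle (2 * Real.pi)) *
        uBasis (a + c) (b + d) p := by
  funext p
  unfold vconv uBasis
  dsimp only
  rw [tsum_eq_single a]
  · by_cases hc : p.1 - a = c
    · have hp1 : p.1 = a + c := by omega
      simp only [hc, if_pos rfl, if_pos hp1, if_true, fourier_arg_add, fourier_add]
      ring
    · have hp1 : p.1 ≠ a + c := by omega
      rw [if_pos rfl, if_neg hc, if_neg hp1, mul_zero, mul_zero]
  · intro m hm
    rw [if_neg hm, zero_mul]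

lemma hconv_uBasis (a b e f : ℤ) :
    hconv (uBasis a b) (uBasis e f) =
      fun p => if b = f then uBasis (a + e) b p else 0 := by
  funext p
  unfold hconv uBasis
  dsimp only
  rw [tsum_eq_single a]
  · by_cases he : p.1 - a = e
    · have hp1 : p.1 = a + e := by omega
      simp only [eq_self_iff_true, if_true, he]
      have key : ∀ φ : AddCircle (2 * Real.pi),
          (fourier b φ : ℂ) * fourier f (p.2 - φ) =
            fourier f p.2 * fourier (b + -f) φ := by
        intro φ
        have h1 : fourier f (p.2 - φ) = fourier f p.2 * fourier (-f) φ := by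
          rw [sub_eq_add_neg, fourier_arg_add]
          congr 1
          rw [fourier_apply, fourier_apply, smul_neg, ← neg_smul]
        rw [h1, fourier_add]
        ring
      simp_rw [key]
      rw [MeasureTheory.integral_const_mul, integral_fourier_haar]
      by_cases hbf : b = f
      · rw [if_pos (by omega), if_pos hbf, if_pos hp1, mul_one, hbf]
      · rw [if_neg (by omega), if_neg hbf, mul_zero]
    · have hp1 : p.1 ≠ a + e := by omega
      simp only [if_neg he, mul_zero, integral_zero]
      split_ifs with hbf <;> simp [if_neg hp1]
  · intro m hm
    simp only [if_neg hm, zero_mul, integral_zero]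

lemma hconv_const_mul (c₁ c₂ : ℂ) (u v : ℤ × AddCircle (2 * Real.pi) → ℂ) :
    hconv (fun p => c₁ * u p) (fun p => c₂ * v p) =
      fun p => c₁ * c₂ * hconv u v p := by
  funext p
  unfold hconv
  rw [← tsum_mul_left]
  congr 1; funext m
  rw [← MeasureTheory.integral_const_mul]
  congr 1; funext φ
  ring

lemma vconv_const_mul (r : ℝ) (c₁ c₂ : ℂ) (u v : ℤ × AddCircle (2 * Real.pi) → ℂ) :
    vconv r (fun p => c₁ * u p) (fun p => c₂ * v p) =
      fun p => c₁ * c₂ * vconv r u v p := by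
  funext p
  unfold vconv
  rw [← tsum_mul_left]
  congr 1; funext m
  ring

/-- If `b = f` and `d = h`, then
`(u_{ab} ∘* u_{cd}) •* (u_{ef} ∘* u_{gh}) = (u_{ab} •* u_{ef}) ∘* (u_{cd} •* u_{gh})`. -/
theorem compat_uBasis_of_eq (r : ℝ) (a b c d e f g h : ℤ) (hbf : b = f) (hdh : d = h) :
    hconv (vconv r (uBasis a b) (uBasis c d)) (vconv r (uBasis e f) (uBasis g h)) =
      vconv r (hconv (uBasis a b) (uBasis e f)) (hconv (uBasis c d) (uBasis g h)) := by
  subst hbf hdh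
  have h1 : (fun p => if (b : ℤ) = b then uBasis (a + e) b p else 0) = uBasis (a + e) b := by
    funext p; rw [if_pos rfl]
  have h2 : (fun p => if (d : ℤ) = d then uBasis (c + g) d p else 0) = uBasis (c + g) d := by
    funext p; rw [if_pos rfl]
  rw [vconv_uBasis r a b c d, vconv_uBasis r e b g d,
    hconv_const_mul, hconv_uBasis, hconv_uBasis a b e b, hconv_uBasis c d g d,
    h1, h2, vconv_uBasis r (a + e) b (c + g) d]
  funext p
  dsimp only
  rw [if_pos rfl]
  have hcoef : (fourier b ((r * (c : ℝ) : ℝ) : AddCircle (2 * Real.pi)) : ℂ) *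
      fourier b ((r * (g : ℝ) : ℝ) : AddCircle (2 * Real.pi)) =
      fourier b ((r * ((c + g : ℤ) : ℝ) : ℝ) : AddCircle (2 * Real.pi)) := by
    rw [← fourier_arg_add]
    congr 1
    rw [← QuotientAddGroup.mk_add]
    congr 1
    push_cast
    ring
  have hidx : a + c + (e + g) = a + e + (c + g) := by ring
  rw [hcoef, hidx]
end

section
/- Let G be a compact topological group with Haar measure μ normalized so that μ(G) = 1, let K be a countable subgroup of the center of G regarded as a discrete group, let n ≥ 1, and let π : G → GL(n,ℂ) be a continuous representation with matrix coefficients π_{ij}(g) = (π(g))_{ij}. Then for all κ₁, κ₂, λ₁, λ₂ ∈ K, all continuous functions u, v : G → ℂ, and all indices 1 ≤ i, k ≤ n, one has ∑_{j=1}^{n} (u^{κ₁} ∘* π_{ij}^{λ₁}) •* (v^{κ₂} ∘* π_{jk}^{λ₂}) = ((L_{λ₁}u * L_{λ₂}v) · π_{ik})^{κ₁λ₁κ₂λ₂}. -/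
open MeasureTheory
open scoped Classical

/-- Convolution of complex-valued functions on a group with respect to a measure `μ`:
`(u * v)(g) = ∫_G u(h) v(h⁻¹g) dμ(h)`. -/
noncomputable def conv {G : Type*} [Group G] [MeasurableSpace G] (μ : Measure G)
    (u v : G → ℂ) : G → ℂ :=
  fun g => ∫ h, u h * v (h⁻¹ * g) ∂μ

/-- Left translation of a function: `(L_κ f)(x) = f(κx)`. -/
def lTrans {G : Type*} [Group G] (κ : G) (f : G → ℂ) : G → ℂ := fun x => f (κ * x)

/-- The function `u^κ : K × G → ℂ`, `u^κ(x,y) = u(y)` if `x = κ` and `0` otherwise. -/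
noncomputable def lvl {G : Type*} [Group G] (K : Subgroup G) (κ : K) (u : G → ℂ) : K × G → ℂ :=
  fun p => if p.1 = κ then u p.2 else 0

/-- Horizontal convolution on `K × G` (from the product group structure):
`(f •* g)(x,y) = ∑_{ℓ∈K} ∫_G f(ℓ,h) g(ℓ⁻¹x, h⁻¹y) dμ(h)`. -/
noncomputable def hconvK {G : Type*} [Group G] [MeasurableSpace G] (μ : Measure G)
    (K : Subgroup G) (f g : K × G → ℂ) : K × G → ℂ :=
  fun p => ∑' ℓ : K, ∫ h, f (ℓ, h) * g (ℓ⁻¹ * p.1, h⁻¹ * p.2) ∂μ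

/-- Vertical convolution on `K ⋉ G` (from the action groupoid structure):
`(f ∘* g)(x,y) = ∑_{ℓ∈K} f(ℓ, ℓ⁻¹xy) g(ℓ⁻¹x, y)`. -/
noncomputable def vconvK {G : Type*} [Group G] (K : Subgroup G)
    (f g : K × G → ℂ) : K × G → ℂ :=
  fun p => ∑' ℓ : K, f (ℓ, ((ℓ⁻¹ * p.1 : K) : G) * p.2) * g (ℓ⁻¹ * p.1, p.2)

lemma vconv_lvl {G : Type*} [Group G] (K : Subgroup G) (a b : K) (u w : G → ℂ) :
    vconvK K (lvl K a u) (lvl K b w) = lvl K (a * b) (fun y => u ((b : G) * y) * w y) := by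
  funext p
  unfold vconvK lvl
  rw [tsum_eq_single a]
  · by_cases h : p.1 = a * b
    · have h1 : a⁻¹ * p.1 = b := by rw [h]; group
      simp [h, h1]
    · have h1 : a⁻¹ * p.1 ≠ b := by
        intro hb
        apply h
        rw [← hb]
        group
      simp [h, h1]
  · intro ℓ hℓ; simp [hℓ]

lemma hconv_lvl {G : Type*} [Group G] [MeasurableSpace G] (μ : MeasureTheory.Measure G)
    (K : Subgroup G) (a b : K) (f g : G → ℂ) :
    hconvK μ K (lvl K a f) (lvl K b g) = lvl K (a * b) (conv μ f g) := by
  funext p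
  unfold hconvK lvl conv
  rw [tsum_eq_single a]
  · by_cases h : p.1 = a * b
    · have h1 : a⁻¹ * p.1 = b := by rw [h]; group
      simp [h, h1]
    · have h1 : a⁻¹ * p.1 ≠ b := by
        intro hb
        apply h
        rw [← hb]
        group
      simp [h, h1]
  · intro ℓ hℓ; simp [hℓ]

/-- For a compact group `G` with normalized Haar measure `μ`, a countable subgroup `K` of the
center of `G`, an `n`-dimensional continuous representation `π` of `G`, `κ₁, κ₂, λ₁, λ₂ ∈ K`,
continuous `u, v : G → ℂ` and indices `i, k`:
`∑_{j=1}^{n} (u^{κ₁} ∘* π_{ij}^{λ₁}) •* (v^{κ₂} ∘* π_{jk}^{λ₂})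
  = ((L_{λ₁}u * L_{λ₂}v) · π_{ik})^{κ₁λ₁κ₂λ₂}`. -/
theorem sum_hconvK_vconvK_matrixCoeff {G : Type*} [Group G] [TopologicalSpace G]
    [IsTopologicalGroup G] [CompactSpace G] [MeasurableSpace G] [BorelSpace G]
    (μ : Measure G) [μ.IsHaarMeasure] [IsProbabilityMeasure μ]
    (K : Subgroup G) (hK : K ≤ Subgroup.center G) (hKcount : (K : Set G).Countable)
    (n : ℕ) (hn : 1 ≤ n) (π : G →* Matrix.GeneralLinearGroup (Fin n) ℂ)
    (hπ : Continuous fun g => ((π g : Matrix (Fin n) (Fin n) ℂ)))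
    (κ₁ κ₂ lam₁ lam₂ : K) (u v : G → ℂ) (hu : Continuous u) (hv : Continuous v)
    (i k : Fin n) :
    ∑ j : Fin n,
        hconvK μ K
          (vconvK K (lvl K κ₁ u)
            (lvl K lam₁ fun g => (π g : Matrix (Fin n) (Fin n) ℂ) i j))
          (vconvK K (lvl K κ₂ v)
            (lvl K lam₂ fun g => (π g : Matrix (Fin n) (Fin n) ℂ) j k)) =
      lvl K (κ₁ * lam₁ * κ₂ * lam₂)
        (fun g => conv μ (lTrans (lam₁ : G) u) (lTrans (lam₂ : G) v) g *
          (π g : Matrix (Fin n) (Fin n) ℂ) i k) := by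
  have hπel : ∀ (a b : Fin n), Continuous fun g => (π g : Matrix (Fin n) (Fin n) ℂ) a b :=
    fun a b => hπ.matrix_elem a b
  have key : ∀ j : Fin n,
      hconvK μ K
          (vconvK K (lvl K κ₁ u)
            (lvl K lam₁ fun g => (π g : Matrix (Fin n) (Fin n) ℂ) i j))
          (vconvK K (lvl K κ₂ v)
            (lvl K lam₂ fun g => (π g : Matrix (Fin n) (Fin n) ℂ) j k)) =
        lvl K (κ₁ * lam₁ * (κ₂ * lam₂))
          (conv μ (fun y => u ((lam₁ : G) * y) * (π y : Matrix (Fin n) (Fin n) ℂ) i j)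
            (fun y => v ((lam₂ : G) * y) * (π y : Matrix (Fin n) (Fin n) ℂ) j k)) := by
    intro j
    rw [vconv_lvl, vconv_lvl, hconv_lvl]
  simp only [key]
  funext p
  simp only [Finset.sum_apply, lvl, mul_assoc]
  by_cases h : p.1 = κ₁ * (lam₁ * (κ₂ * lam₂))
  · simp only [h, if_true]
    set g := p.2
    unfold conv lTrans
    rw [← MeasureTheory.integral_finset_sum]
    · rw [← MeasureTheory.integral_mul_const]
      congr 1
      funext h'
      have hmul : ∑ j : Fin n, (π h' : Matrix (Fin n) (Fin n) ℂ) i j *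
          (π (h'⁻¹ * g) : Matrix (Fin n) (Fin n) ℂ) j k
          = (π g : Matrix (Fin n) (Fin n) ℂ) i k := by
        rw [← Matrix.mul_apply, ← Units.val_mul, ← map_mul, mul_inv_cancel_left]
      calc ∑ j : Fin n, u ((lam₁ : G) * h') * (π h' : Matrix (Fin n) (Fin n) ℂ) i j *
              (v ((lam₂ : G) * (h'⁻¹ * g)) * (π (h'⁻¹ * g) : Matrix (Fin n) (Fin n) ℂ) j k)
          = u ((lam₁ : G) * h') * v ((lam₂ : G) * (h'⁻¹ * g)) *
              ∑ j : Fin n, (π h' : Matrix (Fin n) (Fin n) ℂ) i j *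
                (π (h'⁻¹ * g) : Matrix (Fin n) (Fin n) ℂ) j k := by
            rw [Finset.mul_sum]
            exact Finset.sum_congr rfl fun j _ => by ring
        _ = u ((lam₁ : G) * h') * v ((lam₂ : G) * (h'⁻¹ * g)) *
              (π g : Matrix (Fin n) (Fin n) ℂ) i k := by rw [hmul]
    · intro j _
      refine Continuous.integrable_of_hasCompactSupport ?_ (HasCompactSupport.of_compactSpace _)
      fun_prop
  · simp [h]
end
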